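/- arXiv:math/0608233 — 2 statements merged into one kernel-verified Lean document; each statement's English description precedes it below -/
import Mathlib

section
/- The group ⟨a, b | a² = b⁻¹ a² b⟩ is not isomorphic to the free group on two generators. -/
open FreeGroup

def twofoilRels : Set (FreeGroup (Fin 2)) :=
  {(of 0)^2 * ((of 1)⁻¹ * (of 0)^2 * of 1)⁻¹}

/-!
Isomorphic groups have equally many homomorphisms into any finite group. Into `S₃` there are
`6² = 36` homomorphisms from the free group on two generators, but only `30` from
`⟨a, b | a² = b⁻¹ a² b⟩`: the relation says that `a²` commutes with `b`, which fails exactly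
when `a` is one of the two `3`-cycles and `b` one of the three transpositions.
-/

namespace PresentedGroup

variable {α G : Type*} [Group G]

def homEquiv (rels : Set (FreeGroup α)) :
    (PresentedGroup rels →* G) ≃ {f : α → G // ∀ r ∈ rels, FreeGroup.lift f r = 1} where
  toFun φ := ⟨fun a => φ (.of a), fun r hr => by
    have hlift : FreeGroup.lift (fun a => φ (.of a)) = φ.comp (mk rels) :=
      FreeGroup.ext_hom _ _ fun _ => by simp [PresentedGroup.of]
    rw [hlift, MonoidHom.comp_apply, one_of_mem hr, _root_.map_one]⟩
  invFun f := toGroup f.2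
  left_inv φ := ext fun _ => toGroup.of _
  right_inv f := Subtype.ext <| funext fun _ => toGroup.of _

end PresentedGroup

theorem FreeGroup.natCard_monoidHom (α G : Type*) [Finite α] [Group G] :
    Nat.card (FreeGroup α →* G) = Nat.card G ^ Nat.card α := by
  rw [← Nat.card_fun]
  exact Nat.card_congr FreeGroup.lift.symm

theorem twofoilRels_lift_eq_one_iff {G : Type*} [Group G] (f : Fin 2 → G) :
    (∀ r ∈ twofoilRels, FreeGroup.lift f r = 1) ↔ f 1 * f 0 ^ 2 = f 0 ^ 2 * f 1 := by
  simp only [twofoilRels, Set.mem_singleton_iff, forall_eq, _root_.map_mul, _root_.map_inv,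
    _root_.map_pow, lift_apply_of]
  rw [mul_inv_eq_one, mul_assoc, eq_inv_mul_iff_mul_eq, eq_comm]

theorem natCard_twofoil_monoidHom_perm_three :
    Nat.card (PresentedGroup twofoilRels →* Equiv.Perm (Fin 3)) = 30 := by
  rw [Nat.card_congr ((PresentedGroup.homEquiv _).trans
    (Equiv.subtypeEquivRight twofoilRels_lift_eq_one_iff)), Nat.card_eq_fintype_card]
  decide

/-- `⟨a, b | a² = b⁻¹ a² b⟩` is not isomorphic to the free group on two generators. -/
theorem stmt_2 :
    IsEmpty (PresentedGroup twofoilRels ≃* FreeGroup (Fin 2)) := by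
  refine ⟨fun e => ?_⟩
  have hcard := Nat.card_congr (e.monoidHomCongrLeftEquiv (N := Equiv.Perm (Fin 3)))
  rw [natCard_twofoil_monoidHom_perm_three, FreeGroup.natCard_monoidHom, Nat.card_perm,
    Nat.card_eq_fintype_card, Fintype.card_fin] at hcard
  norm_num at hcard
end

section
/- Let N be the normal closure of the set {x_{j+1}⁻¹ x_i⁻¹ x_j x_i, x_{i+1}⁻¹ x_i} in the free group on x_i, x_{i+1}, x_j, x_{j+1}. Then N equals the normal closure of {x_{j+1}⁻¹ x_{i+1}⁻¹ x_j x_{i+1}, x_{i+1}⁻¹ x_i}. -/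
open FreeGroup

/-- In the free group on `x_i, x_{i+1}, x_j, x_{j+1}` (indexed `0,1,2,3`),
the normal closure of `{x_{j+1}⁻¹ x_i⁻¹ x_j x_i, x_{i+1}⁻¹ x_i}` equals the
normal closure of `{x_{j+1}⁻¹ x_{i+1}⁻¹ x_j x_{i+1}, x_{i+1}⁻¹ x_i}`. -/
theorem stmt_12 :
    Subgroup.normalClosure
        ({(of 3)⁻¹ * (of 0)⁻¹ * of 2 * of 0, (of 1)⁻¹ * of 0} :
          Set (FreeGroup (Fin 4)))
      = Subgroup.normalClosure
        {(of 3)⁻¹ * (of 1)⁻¹ * of 2 * of 1, (of 1)⁻¹ * of 0} := by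
  set r₁ : FreeGroup (Fin 4) := (of 3)⁻¹ * (of 0)⁻¹ * of 2 * of 0 with hr₁
  set r₂ : FreeGroup (Fin 4) := (of 3)⁻¹ * (of 1)⁻¹ * of 2 * of 1 with hr₂
  set u : FreeGroup (Fin 4) := (of 1)⁻¹ * of 0 with hu
  set g : FreeGroup (Fin 4) := (of 1)⁻¹ * (of 2)⁻¹ * of 1 with hg
  have key : r₁ = r₂ * (g * u⁻¹ * g⁻¹) * u := by
    rw [hr₁, hr₂, hu, hg]; group
  apply le_antisymm
  · apply Subgroup.normalClosure_le_normal
    intro x hx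
    have hr₂m : r₂ ∈ Subgroup.normalClosure {r₂, u} :=
      Subgroup.subset_normalClosure (Set.mem_insert _ _)
    have hum : u ∈ Subgroup.normalClosure {r₂, u} :=
      Subgroup.subset_normalClosure (Set.mem_insert_of_mem _ rfl)
    rcases hx with rfl | rfl
    · rw [key]
      exact Subgroup.mul_mem _ (Subgroup.mul_mem _ hr₂m
        (Subgroup.Normal.conj_mem (Subgroup.normalClosure_normal)
          _ (Subgroup.inv_mem _ hum) g)) hum
    · exact hum
  · apply Subgroup.normalClosure_le_normal
    intro x hx
    have hr₁m : r₁ ∈ Subgroup.normalClosure {r₁, u} :=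
      Subgroup.subset_normalClosure (Set.mem_insert _ _)
    have hum : u ∈ Subgroup.normalClosure {r₁, u} :=
      Subgroup.subset_normalClosure (Set.mem_insert_of_mem _ rfl)
    rcases hx with rfl | rfl
    · have key2 : r₂ = r₁ * u⁻¹ * (g * u * g⁻¹) := by
        rw [hr₁, hr₂, hu, hg]; group
      rw [key2]
      exact Subgroup.mul_mem _ (Subgroup.mul_mem _ hr₁m (Subgroup.inv_mem _ hum))
        (Subgroup.Normal.conj_mem (Subgroup.normalClosure_normal) _ hum g)
    · exact hum
end
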